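/- Let C be a codifferential category with finite coproducts (hence finite biproducts, by additivity). Let (A, ν) be a T-algebra and M a module over the commutative algebra induced on A. Define β₁ = T(π₁);ν : T(A⊕M) → A and β₂ = d_{T(A⊕M)};(T(π₁) ⊗ π₂);(ν ⊗ 1_M);•_M : T(A⊕M) → M. Then β = ⟨β₁, β₂⟩ : T(A⊕M) → A⊕M is a T-algebra structure on A⊕M, i.e. η_{A⊕M};β = 1_{A⊕M} and μ_{A⊕M};β = T(β);β. -/

import Mathlib

/-!
The first component `β₁ = Tπ₁ ≫ ν` is the image of `π₁` under the free–forgetful adjunction,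
hence a map of `T`-algebras out of the free algebra `T(A ⊕ M)`, and both laws hold for it.
The second component has the shape `d ≫ (φ ⊗ g) ≫ •` with `φ = β₁` a homomorphism of
algebras `T(A ⊕ M) ⟶ A`, i.e. it is the `φ`-derivation extending `g = π₂`. For any such map
the linear rule (d3) gives back `g` along `η`, the chain rule (d4) combined with the module
axioms rewrites its precomposite with `μ` in terms of `μ ≫ φ` and the map itself, and
naturality of `d` rewrites its precomposite with `Tβ` in exactly the same form.
-/

open CategoryTheory CategoryTheory.Limits CategoryTheory.MonoidalCategory

universe v u

namespace CodiffPaper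

/-- A category enriched in commutative monoids: each hom-set is a commutative
monoid and composition is biadditive (and preserves zero). -/
class CMonEnriched (C : Type u) [Category.{v} C] where
  [homMonoid : ∀ X Y : C, AddCommMonoid (X ⟶ Y)]
  add_comp : ∀ {X Y Z : C} (f g : X ⟶ Y) (h : Y ⟶ Z), (f + g) ≫ h = f ≫ h + g ≫ h
  comp_add : ∀ {X Y Z : C} (f : X ⟶ Y) (g h : Y ⟶ Z), f ≫ (g + h) = f ≫ g + f ≫ h
  zero_comp : ∀ {X Y Z : C} (f : Y ⟶ Z), (0 : X ⟶ Y) ≫ f = (0 : X ⟶ Z)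
  comp_zero : ∀ {X Y Z : C} (f : X ⟶ Y), f ≫ (0 : Y ⟶ Z) = (0 : X ⟶ Z)

attribute [instance] CMonEnriched.homMonoid

instance (priority := 100) CMonEnriched.toHasZeroMorphisms
    (C : Type u) [Category.{v} C] [CMonEnriched C] : HasZeroMorphisms C where
  zero X Y := inferInstance
  comp_zero := fun {X Y} f Z => CMonEnriched.comp_zero f
  zero_comp := fun X {Y Z} f => CMonEnriched.zero_comp f

/-- An additive symmetric monoidal category: commutative-monoid enriched, and
the tensor product is additive in each variable. -/
class AdditiveMonoidal (C : Type u) [Category.{v} C] [MonoidalCategory C] extends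
    CMonEnriched C where
  add_tensorHom : ∀ {X Y Z W : C} (f g : X ⟶ Y) (h : Z ⟶ W),
    (f + g) ⊗ₘ h = (f ⊗ₘ h) + (g ⊗ₘ h)
  tensorHom_add : ∀ {X Y Z W : C} (f : X ⟶ Y) (g h : Z ⟶ W),
    f ⊗ₘ (g + h) = (f ⊗ₘ g) + (f ⊗ₘ h)
  zero_tensorHom : ∀ {X Y Z W : C} (h : Z ⟶ W), (0 : X ⟶ Y) ⊗ₘ h = 0
  tensorHom_zero : ∀ {X Y Z W : C} (f : X ⟶ Y), f ⊗ₘ (0 : Z ⟶ W) = 0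

variable {C : Type u} [Category.{v} C]

/-- `π : Y ⟶ Q` is a coequalizer of `f` and `g` (elementwise formulation). -/
def IsCoeq {X Y Q : C} (f g : X ⟶ Y) (π : Y ⟶ Q) : Prop :=
  f ≫ π = g ≫ π ∧ ∀ {Z : C} (h : Y ⟶ Z), f ≫ h = g ≫ h → ∃! t : Q ⟶ Z, π ≫ t = h

/-- The tensor product preserves reflexive coequalizers in each variable. -/
def TensorPreservesReflCoeq (C : Type u) [Category.{v} C] [MonoidalCategory C] : Prop :=
  ∀ {X Y Q : C} (f g : X ⟶ Y) (s : Y ⟶ X) (π : Y ⟶ Q),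
    s ≫ f = 𝟙 Y → s ≫ g = 𝟙 Y → IsCoeq f g π →
      ∀ Z : C, IsCoeq (Z ◁ f) (Z ◁ g) (Z ◁ π) ∧ IsCoeq (f ▷ Z) (g ▷ Z) (π ▷ Z)

section Monoidal

variable [MonoidalCategory C]

/-- A commutative algebra (commutative monoid object) structure. -/
structure IsCommAlg [SymmetricCategory C] {A : C} (mul : A ⊗ A ⟶ A) (unit : 𝟙_ C ⟶ A) : Prop where
  one_mul : (unit ▷ A) ≫ mul = (λ_ A).hom
  mul_one : (A ◁ unit) ≫ mul = (ρ_ A).hom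
  mul_assoc : (mul ▷ A) ≫ mul = (α_ A A A).hom ≫ (A ◁ mul) ≫ mul
  mul_comm : (β_ A A).hom ≫ mul = mul

/-- `f : A ⟶ B` is a homomorphism of algebras. -/
structure IsAlgHom {A B : C} (mulA : A ⊗ A ⟶ A) (unitA : 𝟙_ C ⟶ A)
    (mulB : B ⊗ B ⟶ B) (unitB : 𝟙_ C ⟶ B) (f : A ⟶ B) : Prop where
  map_mul : (f ⊗ₘ f) ≫ mulB = mulA ≫ f
  map_one : unitA ≫ f = unitB

/-- `act : A ⊗ M ⟶ M` is a module structure on `M` over the algebra `(A, mulA, unitA)`. -/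
structure IsModule {A M : C} (mulA : A ⊗ A ⟶ A) (unitA : 𝟙_ C ⟶ A)
    (act : A ⊗ M ⟶ M) : Prop where
  one_act : (unitA ▷ M) ≫ act = (λ_ M).hom
  mul_act : (mulA ▷ M) ≫ act = (α_ A A M).hom ≫ (A ◁ act) ≫ act

/-- A morphism of modules over `A` (a linear map). -/
def IsModuleMap {A M N : C} (actM : A ⊗ M ⟶ M) (actN : A ⊗ N ⟶ N) (h : M ⟶ N) : Prop :=
  actM ≫ h = (A ◁ h) ≫ actN

/-- The free `A`-module structure on `A ⊗ X`. -/
def freeAct {A : C} (mulA : A ⊗ A ⟶ A) (X : C) : A ⊗ (A ⊗ X) ⟶ A ⊗ X :=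
  (α_ A A X).inv ≫ (mulA ▷ X)

/-- `der : A ⟶ M` is a derivation from the algebra `(A, mulA, unitA)` to the module
`(M, act)`:  `m;der = c;(1⊗der);• + (1⊗der);•` and `e;der = 0`. -/
def IsDerivation [SymmetricCategory C] [CMonEnriched C] {A M : C}
    (mulA : A ⊗ A ⟶ A) (unitA : 𝟙_ C ⟶ A) (act : A ⊗ M ⟶ M) (der : A ⟶ M) : Prop :=
  (mulA ≫ der = (β_ A A).hom ≫ (A ◁ der) ≫ act + (A ◁ der) ≫ act) ∧ unitA ≫ der = 0

variable [SymmetricCategory C]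

/-- An algebra modality: each `T X` is naturally a commutative algebra. -/
structure IsAlgebraModality (T : Monad C)
    (mul : ∀ X : C, T.obj X ⊗ T.obj X ⟶ T.obj X)
    (unit : ∀ X : C, 𝟙_ C ⟶ T.obj X) : Prop where
  commAlg : ∀ X : C, IsCommAlg (mul X) (unit X)
  map_hom : ∀ {X Y : C} (f : X ⟶ Y),
    IsAlgHom (mul X) (unit X) (mul Y) (unit Y) (T.map f)
  mu_hom : ∀ X : C,
    IsAlgHom (mul (T.obj X)) (unit (T.obj X)) (mul X) (unit X) (T.μ.app X)

/-- A (bundled) algebra modality on `C`. -/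
structure AlgebraModality (C : Type u) [Category.{v} C] [MonoidalCategory C]
    [SymmetricCategory C] where
  T : Monad C
  mul : ∀ X : C, T.obj X ⊗ T.obj X ⟶ T.obj X
  unit : ∀ X : C, 𝟙_ C ⟶ T.obj X
  ismod : IsAlgebraModality T mul unit

/-- The multiplication of the commutative algebra induced on a `T`-algebra. -/
def algMul (Φ : AlgebraModality C) (A : Φ.T.Algebra) : A.A ⊗ A.A ⟶ A.A :=
  (Φ.T.η.app A.A ⊗ₘ Φ.T.η.app A.A) ≫ Φ.mul A.A ≫ A.a

/-- The unit of the commutative algebra induced on a `T`-algebra. -/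
def algUnit (Φ : AlgebraModality C) (A : Φ.T.Algebra) : 𝟙_ C ⟶ A.A :=
  Φ.unit A.A ≫ A.a

/-- `f : A ⟶ B` is a homomorphism of `T`-algebras (elementwise formulation). -/
def IsTAlgebraHom (T : Monad C) {A B : C} (νA : T.obj A ⟶ A) (νB : T.obj B ⟶ B)
    (f : A ⟶ B) : Prop :=
  T.map f ≫ νB = νA ≫ f

/-- `b : T X ⟶ X` is a `T`-algebra structure map. -/
def IsTAlgStr (T : Monad C) {X : C} (b : T.obj X ⟶ X) : Prop :=
  (T.η.app X ≫ b = 𝟙 X) ∧ (T.μ.app X ≫ b = T.map b ≫ b)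

variable [AdditiveMonoidal C]

/-- The axioms for a codifferential category on an additive symmetric monoidal
category: an algebra modality together with a deriving transform satisfying
(d1)–(d4). -/
structure IsCodifferential (T : Monad C)
    (mul : ∀ X : C, T.obj X ⊗ T.obj X ⟶ T.obj X)
    (unit : ∀ X : C, 𝟙_ C ⟶ T.obj X)
    (d : ∀ X : C, T.obj X ⟶ T.obj X ⊗ X) : Prop where
  ismod : IsAlgebraModality T mul unit
  d_natural : ∀ {X Y : C} (f : X ⟶ Y), T.map f ≫ d Y = d X ≫ (T.map f ⊗ₘ f)
  d1 : ∀ X : C, unit X ≫ d X = 0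
  d2 : ∀ X : C, mul X ≫ d X =
    (T.obj X ◁ d X) ≫ (α_ (T.obj X) (T.obj X) X).inv ≫ (mul X ▷ X)
    + (d X ▷ T.obj X) ≫ (α_ (T.obj X) X (T.obj X)).hom ≫
        (T.obj X ◁ (β_ X (T.obj X)).hom) ≫ (α_ (T.obj X) (T.obj X) X).inv ≫ (mul X ▷ X)
  d3 : ∀ X : C, T.η.app X ≫ d X = (λ_ X).inv ≫ (unit X ▷ X)
  d4 : ∀ X : C, T.μ.app X ≫ d X =
    d (T.obj X) ≫ (T.μ.app X ⊗ₘ d X) ≫ (α_ (T.obj X) (T.obj X) X).inv ≫ (mul X ▷ X)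

/-- A (bundled) codifferential category structure on `C`. -/
structure Codifferential (C : Type u) [Category.{v} C] [MonoidalCategory C]
    [SymmetricCategory C] [AdditiveMonoidal C] extends AlgebraModality C where
  d : ∀ X : C, T.obj X ⟶ T.obj X ⊗ X
  iscodiff : IsCodifferential T mul unit d

section Biproducts

variable [HasBinaryBiproducts C]

/-- The second component of the structure map of `W(A,M)`:
`β₂ = d;(Tπ₁ ⊗ π₂);(ν ⊗ 1);•`. -/
noncomputable def Wbeta2 (D : Codifferential C) (A : D.T.Algebra) {M : C} (act : A.A ⊗ M ⟶ M) :
    D.T.obj (A.A ⊞ M) ⟶ M :=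
  D.d (A.A ⊞ M) ≫ (D.T.map biprod.fst ⊗ₘ biprod.snd) ≫ (A.a ⊗ₘ 𝟙 M) ≫ act

/-- The structure map `β = ⟨β₁, β₂⟩ : T(A ⊕ M) ⟶ A ⊕ M` of `W(A,M)`. -/
noncomputable def Wbeta (D : Codifferential C) (A : D.T.Algebra) {M : C} (act : A.A ⊗ M ⟶ M) :
    D.T.obj (A.A ⊞ M) ⟶ A.A ⊞ M :=
  biprod.lift (D.T.map biprod.fst ≫ A.a) (Wbeta2 D A act)

end Biproducts

/-- A Kähler category: an additive symmetric monoidal category with an algebra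
modality such that every algebra `T X` has a module of Kähler differentials. -/
structure KahlerCategory (C : Type u) [Category.{v} C] [MonoidalCategory C]
    [SymmetricCategory C] [AdditiveMonoidal C] extends AlgebraModality C where
  Ω : C → C
  act : ∀ X : C, T.obj X ⊗ Ω X ⟶ Ω X
  ismodule : ∀ X : C, IsModule (mul X) (unit X) (act X)
  dK : ∀ X : C, T.obj X ⟶ Ω X
  isder : ∀ X : C, IsDerivation (mul X) (unit X) (act X) (dK X)
  universal : ∀ (X : C) {M : C} (actM : T.obj X ⊗ M ⟶ M),
    IsModule (mul X) (unit X) actM →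
    ∀ der : T.obj X ⟶ M, IsDerivation (mul X) (unit X) actM der →
      ∃! h : Ω X ⟶ M, IsModuleMap (act X) actM h ∧ dK X ≫ h = der

end Monoidal


section TAlgebra

variable {C : Type u} [Category.{v} C]

lemma mu_map_comp_a (T : Monad C) (A : T.Algebra) {X : C} (f : X ⟶ A.A) :
    T.μ.app X ≫ T.map f ≫ A.a = T.map (T.map f ≫ A.a) ≫ A.a := by
  rw [← T.μ.naturality_assoc, A.assoc, Functor.map_comp_assoc]
  rfl

lemma eta_map_comp_a (T : Monad C) (A : T.Algebra) {X : C} (f : X ⟶ A.A) :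
    T.η.app X ≫ T.map f ≫ A.a = f := by
  rw [← T.η.naturality_assoc, A.unit]
  exact Category.comp_id f

variable [MonoidalCategory C]

lemma IsAlgHom.comp {A B E : C} {mulA : A ⊗ A ⟶ A} {unitA : 𝟙_ C ⟶ A} {mulB : B ⊗ B ⟶ B}
    {unitB : 𝟙_ C ⟶ B} {mulE : E ⊗ E ⟶ E} {unitE : 𝟙_ C ⟶ E} {f : A ⟶ B} {g : B ⟶ E}
    (hf : IsAlgHom mulA unitA mulB unitB f) (hg : IsAlgHom mulB unitB mulE unitE g) :
    IsAlgHom mulA unitA mulE unitE (f ≫ g) where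
  map_mul := by rw [← tensorHom_comp_tensorHom_assoc, hg.map_mul, reassoc_of% hf.map_mul]
  map_one := by rw [reassoc_of% hf.map_one, hg.map_one]

variable [SymmetricCategory C]

lemma isAlgHom_a (Φ : AlgebraModality C) (A : Φ.T.Algebra) :
    IsAlgHom (Φ.mul A.A) (Φ.unit A.A) (algMul Φ A) (algUnit Φ A) A.a where
  map_mul := by
    have hη : A.a ≫ Φ.T.η.app A.A = Φ.T.η.app (Φ.T.obj A.A) ≫ Φ.T.map A.a :=
      Φ.T.η.naturality A.a
    -- `ν = η_{TA} ≫ Tν ≫ ν = η_{TA} ≫ μ ≫ ν`, and both `Tν` and `μ` are algebra maps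
    calc (A.a ⊗ₘ A.a) ≫ algMul Φ A
        = (Φ.T.η.app _ ⊗ₘ Φ.T.η.app _) ≫ ((Φ.T.map A.a ⊗ₘ Φ.T.map A.a) ≫ Φ.mul A.A) ≫ A.a := by
          simp only [algMul, tensorHom_comp_tensorHom_assoc, hη, Category.assoc]
      _ = (Φ.T.η.app _ ⊗ₘ Φ.T.η.app _) ≫ ((Φ.T.μ.app A.A ⊗ₘ Φ.T.μ.app A.A) ≫ Φ.mul A.A) ≫
            A.a := by
          rw [(Φ.ismod.map_hom A.a).map_mul, (Φ.ismod.mu_hom A.A).map_mul, Category.assoc,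
            Category.assoc, A.assoc]
      _ = Φ.mul A.A ≫ A.a := by
          rw [Category.assoc, tensorHom_comp_tensorHom_assoc, Monad.left_unit, id_tensorHom_id,
            Category.id_comp]
  map_one := rfl

lemma isAlgHom_map_comp_a (Φ : AlgebraModality C) (A : Φ.T.Algebra) {X : C} (f : X ⟶ A.A) :
    IsAlgHom (Φ.mul X) (Φ.unit X) (algMul Φ A) (algUnit Φ A) (Φ.T.map f ≫ A.a) :=
  (Φ.ismod.map_hom f).comp (isAlgHom_a Φ A)

end TAlgebra

namespace Codifferential

variable {C : Type u} [Category.{v} C] [MonoidalCategory C] [SymmetricCategory C]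
  [AdditiveMonoidal C] (D : Codifferential C)

/-- The `φ`-derivation `T X ⟶ M` extending `g` along `η`. -/
def derivAlong {X B M : C} (φ : D.T.obj X ⟶ B) (g : X ⟶ M) (act : B ⊗ M ⟶ M) :
    D.T.obj X ⟶ M :=
  D.d X ≫ (φ ⊗ₘ g) ≫ act

variable {X B M : C} {mulB : B ⊗ B ⟶ B} {unitB : 𝟙_ C ⟶ B} {φ : D.T.obj X ⟶ B}
  {act : B ⊗ M ⟶ M}

lemma eta_derivAlong (hφ : IsAlgHom (D.mul X) (D.unit X) mulB unitB φ)
    (hact : IsModule mulB unitB act) (g : X ⟶ M) :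
    D.T.η.app X ≫ D.derivAlong φ g act = g := by
  rw [derivAlong, reassoc_of% D.iscodiff.d3 X, ← tensorHom_id, tensorHom_comp_tensorHom_assoc,
    hφ.map_one, Category.id_comp, tensorHom_def'_assoc, hact.one_act,
    ← leftUnitor_inv_naturality_assoc, Iso.inv_hom_id, Category.comp_id]

lemma mu_derivAlong (hφ : IsAlgHom (D.mul X) (D.unit X) mulB unitB φ)
    (hact : IsModule mulB unitB act) (g : X ⟶ M) :
    D.T.μ.app X ≫ D.derivAlong φ g act =
      D.d (D.T.obj X) ≫ ((D.T.μ.app X ≫ φ) ⊗ₘ D.derivAlong φ g act) ≫ act := by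
  have hmul : (D.mul X ▷ X) ≫ (φ ⊗ₘ g) ≫ act =
      (α_ _ _ _).hom ≫ (φ ⊗ₘ φ ⊗ₘ g) ≫ (B ◁ act) ≫ act := by
    rw [← tensorHom_id, tensorHom_comp_tensorHom_assoc, Category.id_comp, ← hφ.map_mul,
      ← Category.comp_id g, ← tensorHom_comp_tensorHom_assoc, tensorHom_id, hact.mul_act,
      associator_naturality_assoc, Category.comp_id]
  rw [derivAlong, reassoc_of% D.iscodiff.d4 X, hmul, Iso.inv_hom_id_assoc,
    tensorHom_comp_tensorHom_assoc, ← id_tensorHom, tensorHom_comp_tensorHom_assoc,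
    Category.comp_id, Category.assoc]

lemma map_derivAlong {Y : C} (h : Y ⟶ X) (g : X ⟶ M) :
    D.T.map h ≫ D.derivAlong φ g act = D.derivAlong (D.T.map h ≫ φ) (h ≫ g) act := by
  rw [derivAlong, reassoc_of% D.iscodiff.d_natural h, tensorHom_comp_tensorHom_assoc, derivAlong]

end Codifferential

section Biproducts

variable {C : Type u} [Category.{v} C] [MonoidalCategory C] [SymmetricCategory C]
  [AdditiveMonoidal C] [HasBinaryBiproducts C] (D : Codifferential C) (A : D.T.Algebra) {M : C}
  (act : A.A ⊗ M ⟶ M)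

@[simp]
lemma Wbeta_fst : Wbeta D A act ≫ biprod.fst = D.T.map biprod.fst ≫ A.a :=
  biprod.lift_fst _ _

@[simp]
lemma Wbeta_snd : Wbeta D A act ≫ biprod.snd = Wbeta2 D A act :=
  biprod.lift_snd _ _

lemma Wbeta2_eq_derivAlong :
    Wbeta2 D A act = D.derivAlong (D.T.map biprod.fst ≫ A.a) biprod.snd act := by
  rw [Wbeta2, Codifferential.derivAlong, tensorHom_comp_tensorHom_assoc, Category.comp_id]

end Biproducts

/-- for a `T`-algebra `(A, ν)` and a module `M` over its induced algebra,
`β = ⟨β₁, β₂⟩ : T(A ⊕ M) ⟶ A ⊕ M` is a `T`-algebra structure on `A ⊕ M`. -/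
theorem statement4 {C : Type u} [Category.{v} C] [MonoidalCategory C] [SymmetricCategory C]
    [AdditiveMonoidal C] [HasBinaryBiproducts C]
    (D : Codifferential C) (A : D.T.Algebra) {M : C} (act : A.A ⊗ M ⟶ M)
    (hact : IsModule (algMul D.toAlgebraModality A) (algUnit D.toAlgebraModality A) act) :
    (D.T.η.app (A.A ⊞ M) ≫ Wbeta D A act = 𝟙 (A.A ⊞ M)) ∧
    (D.T.μ.app (A.A ⊞ M) ≫ Wbeta D A act = D.T.map (Wbeta D A act) ≫ Wbeta D A act) := by
  have hβ₁ := isAlgHom_map_comp_a D.toAlgebraModality A (biprod.fst : A.A ⊞ M ⟶ A.A)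
  have hβ₂ := Wbeta2_eq_derivAlong D A act
  refine ⟨biprod.hom_ext _ _ ?_ ?_, biprod.hom_ext _ _ ?_ ?_⟩
  · rw [Category.assoc, Wbeta_fst, eta_map_comp_a]
    exact (Category.id_comp _).symm
  · rw [Category.assoc, Wbeta_snd, hβ₂, D.eta_derivAlong hβ₁ hact]
    exact (Category.id_comp _).symm
  · rw [Category.assoc, Category.assoc, Wbeta_fst, mu_map_comp_a, ← Functor.map_comp_assoc,
      Wbeta_fst]
  · rw [Category.assoc, Category.assoc, Wbeta_snd, hβ₂, D.mu_derivAlong hβ₁ hact,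
      D.map_derivAlong, ← Functor.map_comp_assoc, Wbeta_fst, Wbeta_snd, ← hβ₂,
      mu_map_comp_a, Codifferential.derivAlong]

end CodiffPaper
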